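/- arXiv:2110.13477 — 5 statements merged into one kernel-verified Lean document; each statement's English description precedes it below -/
import Mathlib

section
/- Under condition B0 (each v_i is C¹, strictly increasing, with v_i(0) = 0) and A nonsingular, for any T₀ ∈ (0,T] the functions t ↦ D(t), t ↦ ã_i(t), t ↦ λ_i(t), and t ↦ λ_i(t)/D(t) are Lipschitz continuous on the interval [T₀, T], for every i ∈ {1,…,d}. -/
/-!
On `[T₀, T]` each `v i` is Lipschitz and bounded below by `v i T₀ > 0`, so
`Σ(t)⁻¹ = A⁻ᵀ diag(1 / v(t)) A⁻¹` is a smooth function of `v(t)` and is uniformly coercive,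
`‖x‖² ≤ κ ⟪x, Σ(t)⁻¹ x⟫`. Subtracting the first-order optimality conditions of `ã(t₁)` and
`ã(t₂)` gives
`‖ã(t₁) - ã(t₂)‖² ≤ κ ⟪(Σ(t₂)⁻¹ - Σ(t₁)⁻¹) ã(t₁), ã(t₁) - ã(t₂)⟫`, and `ã` is bounded, so
`ã` is Lipschitz. Then `D`, `λ i` and `λ i / D` are `C¹` functions of the Lipschitz curve
`t ↦ (v(t), ã(t))` (with `D > 0` because `a` has a positive entry), and a `C¹` function of a
Lipschitz curve is Lipschitz on a compact set.
-/

open Set Matrix NNReal Filter Topology Metric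

theorem LipschitzOnWith.congr {α β : Type*} [PseudoEMetricSpace α] [PseudoEMetricSpace β]
    {K : ℝ≥0} {s : Set α} {f g : α → β} (hf : LipschitzOnWith K f s) (h : EqOn f g s) :
    LipschitzOnWith K g s := fun x hx y hy => by
  rw [← h hx, ← h hy]; exact hf hx hy

section
variable {α E F G : Type*} [PseudoMetricSpace α] [NormedAddCommGroup E] [NormedSpace ℝ E]
  [NormedAddCommGroup F] [NormedSpace ℝ F] [NormedAddCommGroup G] [NormedSpace ℝ G]
  {s : Set α} {f : α → E} {K : ℝ≥0}

theorem IsCompact.exists_lipschitzOnWith_comp_of_contDiffAt (hs : IsCompact s)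
    (hf : LipschitzOnWith K f s) {g : E → F} (hg : ∀ x ∈ s, ContDiffAt ℝ 1 g (f x)) :
    ∃ K', LipschitzOnWith K' (g ∘ f) s := by
  have hloc : LocallyLipschitzOn (f '' s) g := by
    rintro _ ⟨x, hx, rfl⟩
    obtain ⟨K, t, ht, hgt⟩ := (hg x hx).exists_lipschitzOnWith
    exact ⟨K, t, mem_nhdsWithin_of_mem_nhds ht, hgt⟩
  obtain ⟨K', hK'⟩ :=
    hloc.exists_lipschitzOnWith_of_compact (hs.image_of_continuousOn hf.continuousOn)
  exact ⟨K' * K, hK'.comp hf (mapsTo_image f s)⟩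

theorem IsCompact.exists_dist_le_of_contDiffAt (hs : IsCompact s) {U : Set F}
    (hU : IsCompact U) (hf : LipschitzOnWith K f s) {g : E × F → G}
    (hg : ∀ t ∈ s, ∀ u ∈ U, ContDiffAt ℝ 1 g (f t, u)) :
    ∃ L : ℝ≥0, ∀ t₁ ∈ s, ∀ t₂ ∈ s, ∀ u ∈ U,
      dist (g (f t₁, u)) (g (f t₂, u)) ≤ L * dist t₁ t₂ := by
  have hfU : LipschitzOnWith (max (K * 1) 1) (fun p : α × F => (f p.1, p.2)) (s ×ˢ U) :=
    (hf.comp LipschitzWith.prod_fst.lipschitzOnWith fun _ (hp : _ ∈ s ×ˢ U) => hp.1).prodMk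
      LipschitzWith.prod_snd.lipschitzOnWith
  obtain ⟨L, hL⟩ := (hs.prod hU).exists_lipschitzOnWith_comp_of_contDiffAt hfU
    fun p hp => hg p.1 hp.1 p.2 hp.2
  refine ⟨L, fun t₁ h₁ t₂ h₂ u hu => ?_⟩
  simpa [Prod.dist_eq] using hL.dist_le_mul (t₁, u) ⟨h₁, hu⟩ (t₂, u) ⟨h₂, hu⟩

end

namespace Matrix

variable {ι : Type*} [Fintype ι]

theorem IsSymm.dotProduct_mulVec_comm {M : Matrix ι ι ℝ} (hM : M.IsSymm) (x y : ι → ℝ) :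
    x ⬝ᵥ M *ᵥ y = (M *ᵥ x) ⬝ᵥ y := by
  rw [dotProduct_mulVec, ← mulVec_transpose, hM.eq]

theorem IsSymm.dotProduct_mulVec_add_smul {M : Matrix ι ι ℝ} (hM : M.IsSymm) (u w : ι → ℝ)
    (θ : ℝ) :
    (u + θ • w) ⬝ᵥ M *ᵥ (u + θ • w) =
      u ⬝ᵥ M *ᵥ u + θ * (2 * (M *ᵥ u) ⬝ᵥ w + θ * w ⬝ᵥ M *ᵥ w) := by
  simp only [mulVec_add, mulVec_smul, add_dotProduct, dotProduct_add, smul_dotProduct,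
    dotProduct_smul, smul_eq_mul, hM.dotProduct_mulVec_comm u w, dotProduct_comm w (M *ᵥ u)]
  ring

theorem IsSymm.dotProduct_mulVec_sub_nonneg_of_isMinOn {M : Matrix ι ι ℝ} (hM : M.IsSymm)
    {C : Set (ι → ℝ)} (hC : Convex ℝ C) {u x : ι → ℝ} (hu : u ∈ C) (hx : x ∈ C)
    (hmin : IsMinOn (fun y => y ⬝ᵥ M *ᵥ y) C u) :
    0 ≤ (M *ᵥ u) ⬝ᵥ (x - u) := by
  set w := x - u
  have hθ : ∀ θ ∈ Ioc (0 : ℝ) 1, 0 ≤ 2 * (M *ᵥ u) ⬝ᵥ w + θ * w ⬝ᵥ M *ᵥ w := by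
    rintro θ ⟨hθ0, hθ1⟩
    have hle : u ⬝ᵥ M *ᵥ u ≤ (u + θ • w) ⬝ᵥ M *ᵥ (u + θ • w) :=
      hmin (hC.add_smul_sub_mem hu hx ⟨hθ0.le, hθ1⟩)
    rw [hM.dotProduct_mulVec_add_smul] at hle
    exact nonneg_of_mul_nonneg_right (by linarith) hθ0
  have hlim : Tendsto (fun θ : ℝ => 2 * (M *ᵥ u) ⬝ᵥ w + θ * w ⬝ᵥ M *ᵥ w) (𝓝[>] 0)
      (𝓝 (2 * (M *ᵥ u) ⬝ᵥ w)) := by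
    refine tendsto_nhdsWithin_of_tendsto_nhds ?_
    simpa using ((continuous_id.mul continuous_const).const_add _).tendsto (0 : ℝ)
  have := ge_of_tendsto hlim (eventually_of_mem (Ioc_mem_nhdsGT one_pos) hθ)
  linarith

theorem IsSymm.dotProduct_mulVec_sub_le_of_isMinOn {M₁ M₂ : Matrix ι ι ℝ} (hM₁ : M₁.IsSymm)
    (hM₂ : M₂.IsSymm) {C : Set (ι → ℝ)} (hC : Convex ℝ C) {u₁ u₂ : ι → ℝ} (hu₁ : u₁ ∈ C)
    (hu₂ : u₂ ∈ C) (hmin₁ : IsMinOn (fun y => y ⬝ᵥ M₁ *ᵥ y) C u₁)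
    (hmin₂ : IsMinOn (fun y => y ⬝ᵥ M₂ *ᵥ y) C u₂) :
    (u₁ - u₂) ⬝ᵥ M₂ *ᵥ (u₁ - u₂) ≤ ((M₂ - M₁) *ᵥ u₁) ⬝ᵥ (u₁ - u₂) := by
  have h₁ := hM₁.dotProduct_mulVec_sub_nonneg_of_isMinOn hC hu₁ hu₂ hmin₁
  have h₂ := hM₂.dotProduct_mulVec_sub_nonneg_of_isMinOn hC hu₂ hu₁ hmin₂
  rw [hM₂.dotProduct_mulVec_comm]
  simp only [mulVec_sub, sub_mulVec, sub_dotProduct, dotProduct_sub] at h₁ h₂ ⊢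
  linarith

-- `‖x‖` is the sup norm.
theorem sq_norm_le_dotProduct_self (x : ι → ℝ) : ‖x‖ ^ 2 ≤ x ⬝ᵥ x := by
  have hx : ‖x‖ ≤ √(x ⬝ᵥ x) := by
    refine (pi_norm_le_iff_of_nonneg (Real.sqrt_nonneg _)).2 fun i => ?_
    refine Real.abs_le_sqrt ?_
    simpa [dotProduct, sq] using
      Finset.single_le_sum (f := fun j => x j * x j) (fun j _ => mul_self_nonneg _)
        (Finset.mem_univ i)
  exact (Real.le_sqrt (norm_nonneg x) (Finset.sum_nonneg fun j _ => mul_self_nonneg _)).1 hx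

theorem dotProduct_le_card_mul_norm_mul_norm (c w : ι → ℝ) :
    c ⬝ᵥ w ≤ Fintype.card ι * ‖c‖ * ‖w‖ := by
  calc c ⬝ᵥ w ≤ ∑ _i : ι, ‖c‖ * ‖w‖ := by
        refine Finset.sum_le_sum fun i _ => ?_
        calc c i * w i ≤ ‖c i‖ * ‖w i‖ := by
              rw [← norm_mul]; exact Real.le_norm_self _
          _ ≤ ‖c‖ * ‖w‖ := mul_le_mul (norm_le_pi_norm c i) (norm_le_pi_norm w i)
              (norm_nonneg _) (norm_nonneg _)
    _ = Fintype.card ι * ‖c‖ * ‖w‖ := by simp [mul_assoc]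

theorem norm_le_of_sq_norm_le_dotProduct {κ : ℝ} (hκ : 0 ≤ κ) {c w : ι → ℝ}
    (h : ‖w‖ ^ 2 ≤ κ * c ⬝ᵥ w) : ‖w‖ ≤ κ * Fintype.card ι * ‖c‖ := by
  have h' : ‖w‖ * ‖w‖ ≤ κ * Fintype.card ι * ‖c‖ * ‖w‖ := by
    have := mul_le_mul_of_nonneg_left (dotProduct_le_card_mul_norm_mul_norm c w) hκ
    nlinarith
  rcases (norm_nonneg w).eq_or_lt with hw | hw
  · rw [← hw]; positivity
  · exact le_of_mul_le_mul_right h' hw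

theorem lipschitzOnWith_of_isMinOn {α : Type*} [PseudoMetricSpace α] {s : Set α}
    {Q : α → Matrix ι ι ℝ} {u : α → ι → ℝ} {C : Set (ι → ℝ)} (hC : Convex ℝ C)
    (hQ : ∀ t ∈ s, (Q t).IsSymm) (hu : ∀ t ∈ s, u t ∈ C)
    (hmin : ∀ t ∈ s, IsMinOn (fun x => x ⬝ᵥ Q t *ᵥ x) C (u t)) {κ L : ℝ≥0}
    (hcoer : ∀ t ∈ s, ∀ x, ‖x‖ ^ 2 ≤ κ * x ⬝ᵥ Q t *ᵥ x)
    (hL : ∀ t₁ ∈ s, ∀ t₂ ∈ s, ‖(Q t₂ - Q t₁) *ᵥ u t₁‖ ≤ L * dist t₁ t₂) :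
    LipschitzOnWith (κ * Fintype.card ι * L) u s := by
  refine LipschitzOnWith.of_dist_le_mul fun t₁ h₁ t₂ h₂ => ?_
  have hstab := (hQ t₁ h₁).dotProduct_mulVec_sub_le_of_isMinOn (hQ t₂ h₂) hC (hu t₁ h₁)
    (hu t₂ h₂) (hmin t₁ h₁) (hmin t₂ h₂)
  rw [dist_eq_norm]
  calc ‖u t₁ - u t₂‖ ≤ κ * Fintype.card ι * ‖(Q t₂ - Q t₁) *ᵥ u t₁‖ :=
        norm_le_of_sq_norm_le_dotProduct κ.2
          ((hcoer t₂ h₂ _).trans (mul_le_mul_of_nonneg_left hstab κ.2))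
    _ ≤ κ * Fintype.card ι * (L * dist t₁ t₂) := by gcongr; exact hL t₁ h₁ t₂ h₂
    _ = _ := by push_cast; ring

end Matrix

section Precision
variable {ι : Type*} [Fintype ι] [DecidableEq ι] (A : Matrix ι ι ℝ)

noncomputable def precisionMatrix (w : ι → ℝ) : Matrix ι ι ℝ := (A⁻¹)ᵀ * diagonal w⁻¹ * A⁻¹

variable {A}

theorem inv_mul_diagonal_mul_transpose {w : ι → ℝ} (hw : ∀ k, w k ≠ 0) :
    (A * diagonal w * Aᵀ)⁻¹ = precisionMatrix A w := by
  have hdiag : (diagonal w)⁻¹ = diagonal w⁻¹ := inv_eq_right_inv <| by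
    rw [diagonal_mul_diagonal, ← diagonal_one]
    exact congr_arg diagonal (funext fun k => mul_inv_cancel₀ (hw k))
  rw [Matrix.mul_inv_rev, Matrix.mul_inv_rev, hdiag, ← transpose_nonsing_inv, ← Matrix.mul_assoc,
    precisionMatrix]

variable (A)

theorem isSymm_precisionMatrix (w : ι → ℝ) : (precisionMatrix A w).IsSymm := by
  rw [IsSymm, precisionMatrix, transpose_mul, transpose_mul, transpose_transpose,
    diagonal_transpose, Matrix.mul_assoc]

theorem precisionMatrix_mulVec (w u : ι → ℝ) :
    precisionMatrix A w *ᵥ u = (A⁻¹)ᵀ *ᵥ (w⁻¹ * A⁻¹ *ᵥ u) := by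
  rw [precisionMatrix, ← mulVec_mulVec, ← mulVec_mulVec]
  congr 1
  ext k
  exact mulVec_diagonal _ _ k

theorem dotProduct_precisionMatrix_mulVec (w x : ι → ℝ) :
    x ⬝ᵥ precisionMatrix A w *ᵥ x = ∑ k, (w k)⁻¹ * (A⁻¹ *ᵥ x) k ^ 2 := by
  rw [precisionMatrix_mulVec, dotProduct_mulVec, vecMul_transpose]
  simp only [dotProduct, Pi.mul_apply, Pi.inv_apply]
  exact Finset.sum_congr rfl fun k _ => by ring

variable {A}

theorem dotProduct_precisionMatrix_mulVec_pos (hA : IsUnit A.det) {w : ι → ℝ} (hw : ∀ k, 0 < w k)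
    {x : ι → ℝ} (hx : x ≠ 0) : 0 < x ⬝ᵥ precisionMatrix A w *ᵥ x := by
  have hy : A⁻¹ *ᵥ x ≠ 0 := fun h => hx <| by
    simpa [mulVec_mulVec, mul_nonsing_inv _ hA] using congr_arg (A *ᵥ ·) h
  obtain ⟨k, hk⟩ := Function.ne_iff.1 hy
  rw [dotProduct_precisionMatrix_mulVec]
  exact Finset.sum_pos' (fun j _ => mul_nonneg (inv_nonneg.2 (hw j).le) (sq_nonneg _))
    ⟨k, Finset.mem_univ k, mul_pos (inv_pos.2 (hw k)) (sq_pos_of_ne_zero hk)⟩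

theorem exists_sq_norm_le_mul_dotProduct_precisionMatrix_mulVec (hA : IsUnit A.det) (V : ℝ≥0) :
    ∃ κ : ℝ≥0, ∀ w : ι → ℝ, (∀ k, 0 < w k ∧ w k ≤ V) →
      ∀ x, ‖x‖ ^ 2 ≤ κ * x ⬝ᵥ precisionMatrix A w *ᵥ x := by
  set L := LinearMap.toContinuousLinearMap (mulVecLin A)
  refine ⟨‖L‖₊ ^ 2 * V, fun w hw x => ?_⟩
  set y := A⁻¹ *ᵥ x
  have hx : ‖x‖ ≤ ‖L‖ * ‖y‖ := by
    simpa [L, y, mulVec_mulVec, mul_nonsing_inv _ hA] using L.le_opNorm y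
  have hy : y ⬝ᵥ y ≤ V * x ⬝ᵥ precisionMatrix A w *ᵥ x := by
    rw [dotProduct_precisionMatrix_mulVec, Finset.mul_sum]
    refine Finset.sum_le_sum fun k _ => ?_
    have : 1 ≤ V * (w k)⁻¹ := by
      rw [← div_eq_mul_inv, one_le_div (hw k).1]; exact (hw k).2
    nlinarith [sq_nonneg (y k)]
  calc ‖x‖ ^ 2 ≤ ‖L‖ ^ 2 * ‖y‖ ^ 2 := by rw [← mul_pow]; gcongr
    _ ≤ ‖L‖ ^ 2 * (V * x ⬝ᵥ precisionMatrix A w *ᵥ x) :=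
        mul_le_mul_of_nonneg_left ((sq_norm_le_dotProduct_self y).trans hy) (by positivity)
    _ = _ := by push_cast; ring

theorem contDiffAt_precisionMatrix_mulVec {n : WithTop ℕ∞} {w : ι → ℝ} (hw : ∀ k, w k ≠ 0)
    (u : ι → ℝ) :
    ContDiffAt ℝ n (fun p : (ι → ℝ) × (ι → ℝ) => precisionMatrix A p.1 *ᵥ p.2) (w, u) := by
  have hmulVec (M : Matrix ι ι ℝ) : ContDiff ℝ n (M *ᵥ ·) :=
    (LinearMap.toContinuousLinearMap (mulVecLin M)).contDiff
  have hinv : ContDiffAt ℝ n (fun w : ι → ℝ => w⁻¹) w :=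
    contDiffAt_pi.2 fun k => (contDiffAt_apply ℝ _ k w).inv (hw k)
  simp_rw [precisionMatrix_mulVec]
  exact (hmulVec _).contDiffAt.comp _ ((hinv.comp _ contDiffAt_fst).mul
    ((hmulVec _).contDiffAt.comp _ contDiffAt_snd))

theorem contDiffAt_dotProduct_precisionMatrix_mulVec {n : WithTop ℕ∞} {w : ι → ℝ}
    (hw : ∀ k, w k ≠ 0) (u : ι → ℝ) :
    ContDiffAt ℝ n (fun p : (ι → ℝ) × (ι → ℝ) => p.2 ⬝ᵥ precisionMatrix A p.1 *ᵥ p.2) (w, u) := by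
  have hdot : ContDiff ℝ n (fun q : (ι → ℝ) × (ι → ℝ) => q.1 ⬝ᵥ q.2) := by
    simp only [dotProduct]; fun_prop
  exact hdot.contDiffAt.comp _ (contDiffAt_snd.prodMk (contDiffAt_precisionMatrix_mulVec hw u))

theorem exists_lipschitzOnWith_of_isMinOn_precisionMatrix {α : Type*} [PseudoMetricSpace α]
    {s : Set α} (hs : IsCompact s) (hA : IsUnit A.det) {w : α → ι → ℝ} {K : ℝ≥0}
    (hw : LipschitzOnWith K w s) {V : ℝ≥0} (hwV : ∀ t ∈ s, ∀ k, 0 < w t k ∧ w t k ≤ V)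
    {C : Set (ι → ℝ)} (hC : Convex ℝ C) {y₀ : ι → ℝ} (hy₀ : y₀ ∈ C) {u : α → ι → ℝ}
    (hu : ∀ t ∈ s, u t ∈ C)
    (hmin : ∀ t ∈ s, IsMinOn (fun x => x ⬝ᵥ precisionMatrix A (w t) *ᵥ x) C (u t)) :
    ∃ K', LipschitzOnWith K' u s := by
  obtain ⟨κ, hκ⟩ := exists_sq_norm_le_mul_dotProduct_precisionMatrix_mulVec hA V
  have hw0 : ∀ t ∈ s, ∀ k, w t k ≠ 0 := fun t ht k => (hwV t ht k).1.ne'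
  have hcont : ContinuousOn (fun t => y₀ ⬝ᵥ precisionMatrix A (w t) *ᵥ y₀) s := fun t ht =>
    (contDiffAt_dotProduct_precisionMatrix_mulVec (n := 0) (hw0 t ht) y₀).continuousAt
      |>.comp_continuousWithinAt (f := fun t => (w t, y₀))
        ((hw.continuousOn t ht).prodMk continuousWithinAt_const)
  obtain ⟨M, hM⟩ := hs.exists_bound_of_continuousOn hcont
  have hR : ∀ t ∈ s, u t ∈ closedBall 0 √(κ * M) := by
    intro t ht
    rw [mem_closedBall_zero_iff]
    refine Real.le_sqrt_of_sq_le ?_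
    calc ‖u t‖ ^ 2 ≤ κ * u t ⬝ᵥ precisionMatrix A (w t) *ᵥ u t := hκ _ (hwV t ht) _
      _ ≤ κ * y₀ ⬝ᵥ precisionMatrix A (w t) *ᵥ y₀ := by gcongr; exact hmin t ht hy₀
      _ ≤ κ * M := by gcongr; exact (Real.le_norm_self _).trans (hM t ht)
  obtain ⟨L, hL⟩ := hs.exists_dist_le_of_contDiffAt (isCompact_closedBall 0 √(κ * M)) hw
    fun t ht u _ => contDiffAt_precisionMatrix_mulVec (A := A) (hw0 t ht) u
  refine ⟨_, lipschitzOnWith_of_isMinOn hC (fun t _ => isSymm_precisionMatrix A _) hu hmin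
    (fun t ht => hκ _ (hwV t ht)) (L := L) fun t₁ h₁ t₂ h₂ => ?_⟩
  rw [sub_mulVec, ← dist_eq_norm, dist_comm]
  exact hL t₁ h₁ t₂ h₂ _ (hR t₁ h₁)

theorem exists_lipschitzOnWith_precisionMatrix {α : Type*} [PseudoMetricSpace α] {s : Set α}
    (hs : IsCompact s) (hA : IsUnit A.det) {w u : α → ι → ℝ} {K K' : ℝ≥0}
    (hw : LipschitzOnWith K w s) (hu : LipschitzOnWith K' u s) (hw0 : ∀ t ∈ s, ∀ k, 0 < w t k)
    (hu0 : ∀ t ∈ s, u t ≠ 0) :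
    (∃ L, LipschitzOnWith L (fun t => u t ⬝ᵥ precisionMatrix A (w t) *ᵥ u t) s) ∧
    (∀ i, ∃ L, LipschitzOnWith L (fun t => (precisionMatrix A (w t) *ᵥ u t) i) s) ∧
    (∀ i, ∃ L, LipschitzOnWith L (fun t => (precisionMatrix A (w t) *ᵥ u t) i /
      u t ⬝ᵥ precisionMatrix A (w t) *ᵥ u t) s) := by
  have hcomp (g : (ι → ℝ) × (ι → ℝ) → ℝ) (hg : ∀ t ∈ s, ContDiffAt ℝ 1 g (w t, u t)) :
      ∃ L, LipschitzOnWith L (fun t => g (w t, u t)) s :=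
    hs.exists_lipschitzOnWith_comp_of_contDiffAt (hw.prodMk hu) hg
  have hD : ∀ t ∈ s, ContDiffAt ℝ 1
      (fun p : (ι → ℝ) × (ι → ℝ) => p.2 ⬝ᵥ precisionMatrix A p.1 *ᵥ p.2) (w t, u t) :=
    fun t ht => contDiffAt_dotProduct_precisionMatrix_mulVec (fun k => (hw0 t ht k).ne') _
  have hlam : ∀ t ∈ s, ∀ i, ContDiffAt ℝ 1
      (fun p : (ι → ℝ) × (ι → ℝ) => (precisionMatrix A p.1 *ᵥ p.2) i) (w t, u t) :=
    fun t ht => contDiffAt_pi.1 (contDiffAt_precisionMatrix_mulVec (fun k => (hw0 t ht k).ne') _)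
  have hD0 : ∀ t ∈ s, u t ⬝ᵥ precisionMatrix A (w t) *ᵥ u t ≠ 0 := fun t ht =>
    (dotProduct_precisionMatrix_mulVec_pos hA (hw0 t ht) (hu0 t ht)).ne'
  exact ⟨hcomp _ hD, fun i => hcomp _ fun t ht => hlam t ht i,
    fun i => hcomp _ fun t ht => (hlam t ht i).div (hD t ht) (hD0 t ht)⟩

end Precision

theorem stmt7_general {d : ℕ} (T : ℝ)
    (v : Fin d → ℝ → ℝ)
    (hv_C1 : ∀ i, ContDiffOn ℝ 1 (v i) (Icc 0 T))
    (hv_mono : ∀ i, StrictMonoOn (v i) (Icc 0 T))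
    (hv_0 : ∀ i, v i 0 = 0)
    (A : Matrix (Fin d) (Fin d) ℝ) (hA : IsUnit A.det)
    (a : Fin d → ℝ) (ha : ∃ i, 0 < a i)
    (Sg : ℝ → Matrix (Fin d) (Fin d) ℝ)
    (hSg : ∀ t, Sg t = A * Matrix.diagonal (fun i => v i t) * Aᵀ)
    (ta : ℝ → Fin d → ℝ)
    (hta : ∀ t ∈ Ioc (0 : ℝ) T, (∀ i, a i ≤ ta t i) ∧
      ∀ y : Fin d → ℝ, (∀ i, a i ≤ y i) →
        ta t ⬝ᵥ (Sg t)⁻¹ *ᵥ ta t ≤ y ⬝ᵥ (Sg t)⁻¹ *ᵥ y)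
    (lam : ℝ → Fin d → ℝ) (hlam : ∀ t, lam t = (Sg t)⁻¹ *ᵥ ta t)
    (D : ℝ → ℝ) (hD : ∀ t, D t = ta t ⬝ᵥ (Sg t)⁻¹ *ᵥ ta t) :
    ∀ T₀ : ℝ, 0 < T₀ → T₀ ≤ T →
      (∃ K : NNReal, LipschitzOnWith K D (Icc T₀ T)) ∧
      (∀ i, ∃ K : NNReal, LipschitzOnWith K (fun t => ta t i) (Icc T₀ T)) ∧
      (∀ i, ∃ K : NNReal, LipschitzOnWith K (fun t => lam t i) (Icc T₀ T)) ∧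
      (∀ i, ∃ K : NNReal, LipschitzOnWith K (fun t => lam t i / D t) (Icc T₀ T)) := by
  intro T₀ hT₀ hT₀T
  obtain ⟨i₀, hi₀⟩ := ha
  have hs : Icc T₀ T ⊆ Ioc 0 T := fun t ht => ⟨hT₀.trans_le ht.1, ht.2⟩
  set w : ℝ → Fin d → ℝ := fun t k => v k t
  obtain ⟨K, hw⟩ := ((contDiffOn_pi.2 hv_C1).mono (hs.trans Ioc_subset_Icc_self))
    |>.exists_lipschitzOnWith one_ne_zero (convex_Icc T₀ T) isCompact_Icc
  have hwV : ∀ t ∈ Icc T₀ T, ∀ k, 0 < w t k ∧ w t k ≤ ‖w T‖₊ := fun t ht k => by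
    obtain ⟨hpos, hle⟩ := (hv_mono k).mapsTo_Ioc (hs ht)
    exact ⟨hv_0 k ▸ hpos, hle.trans ((Real.le_norm_self _).trans (norm_le_pi_norm (w T) k))⟩
  have hinv : ∀ t ∈ Icc T₀ T, (Sg t)⁻¹ = precisionMatrix A (w t) := fun t ht => by
    rw [hSg]; exact inv_mul_diagonal_mul_transpose fun k => (hwV t ht k).1.ne'
  have hmin : ∀ t ∈ Icc T₀ T, ta t ∈ Ici a ∧
      IsMinOn (fun x => x ⬝ᵥ precisionMatrix A (w t) *ᵥ x) (Ici a) (ta t) := fun t ht => by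
    rw [← hinv t ht]; exact hta t (hs ht)
  obtain ⟨Kta, hta_lip⟩ := exists_lipschitzOnWith_of_isMinOn_precisionMatrix isCompact_Icc hA hw
    hwV (convex_Ici a) (mem_Ici.2 le_rfl) (fun t ht => (hmin t ht).1) fun t ht => (hmin t ht).2
  have hta0 : ∀ t ∈ Icc T₀ T, ta t ≠ 0 := fun t ht h => by
    have := (hmin t ht).1 i₀
    simp only [h, Pi.zero_apply] at this
    linarith
  obtain ⟨⟨KD, hDlip⟩, hlamlip, hquotlip⟩ :=
    exists_lipschitzOnWith_precisionMatrix isCompact_Icc hA hw hta_lip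
      (fun t ht k => (hwV t ht k).1) hta0
  refine ⟨⟨KD, hDlip.congr fun t ht => by rw [hD, hinv t ht]⟩,
    fun i => ⟨_, (LipschitzWith.eval i).comp_lipschitzOnWith hta_lip⟩,
    fun i => (hlamlip i).imp fun _ h => h.congr fun t ht => by rw [hlam, hinv t ht],
    fun i => (hquotlip i).imp fun _ h => h.congr fun t ht => by rw [hlam, hD, hinv t ht]⟩

/-- Lemma 4.4 of the paper. Under B0 and `A` nonsingular, for any
`T₀ ∈ (0, T]` the functions `D(·)`, `ã_i(·)`, `λ_i(·)` and `λ_i(·)/D(·)` are Lipschitz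
continuous on `[T₀, T]`, for every `i`. -/
theorem stmt7 {d : ℕ} (T : ℝ) (hT : 0 < T)
    (v : Fin d → ℝ → ℝ)
    (hv_C1 : ∀ i, ContDiffOn ℝ 1 (v i) (Icc 0 T))
    (hv_mono : ∀ i, StrictMonoOn (v i) (Icc 0 T))
    (hv_0 : ∀ i, v i 0 = 0)
    (A : Matrix (Fin d) (Fin d) ℝ) (hA : IsUnit A.det)
    (a : Fin d → ℝ) (ha : ∃ i, 0 < a i)
    (Sg : ℝ → Matrix (Fin d) (Fin d) ℝ)
    (hSg : ∀ t, Sg t = A * Matrix.diagonal (fun i => v i t) * Aᵀ)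
    (ta : ℝ → Fin d → ℝ)
    (hta : ∀ t ∈ Ioc (0 : ℝ) T, (∀ i, a i ≤ ta t i) ∧
      ∀ y : Fin d → ℝ, (∀ i, a i ≤ y i) →
        ta t ⬝ᵥ (Sg t)⁻¹ *ᵥ ta t ≤ y ⬝ᵥ (Sg t)⁻¹ *ᵥ y)
    (lam : ℝ → Fin d → ℝ) (hlam : ∀ t, lam t = (Sg t)⁻¹ *ᵥ ta t)
    (D : ℝ → ℝ) (hD : ∀ t, D t = ta t ⬝ᵥ (Sg t)⁻¹ *ᵥ ta t) :
    ∀ T₀ : ℝ, 0 < T₀ → T₀ ≤ T →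
      (∃ K : NNReal, LipschitzOnWith K D (Icc T₀ T)) ∧
      (∀ i, ∃ K : NNReal, LipschitzOnWith K (fun t => ta t i) (Icc T₀ T)) ∧
      (∀ i, ∃ K : NNReal, LipschitzOnWith K (fun t => lam t i) (Icc T₀ T)) ∧
      (∀ i, ∃ K : NNReal, LipschitzOnWith K (fun t => lam t i / D t) (Icc T₀ T)) :=
  stmt7_general T v hv_C1 hv_mono hv_0 A hA a ha Sg hSg ta hta lam hlam D hD
end

section
/- For any vector f = (f₁,…,f_d) ∈ ℝ^d with Σ_{i=1}^d f_i < 0, writing f_i⁻ := min(f_i, 0), the integral I(L) := ∫_{ℝ^d} 1{∃ t ∈ [0,L] : x_i < f_i·t for all i} · exp(Σ_{i=1}^d x_i) dx converges, as L → ∞, to (Σ_{i=1}^d f_i⁻)/(Σ_{i=1}^d f_i). -/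
/-!
Let `S a b` be the union over `t ∈ [a, b]` of the open orthants `{x | ∀ i, xᵢ < t fᵢ}` and
`G L = ν (S 0 L) - 1`, where `ν = exp (∑ xᵢ) dx` and `s = ∑ fᵢ`. Translation by `h • f` scales `ν`
by `exp (s h)`, and `S 0 h`, `S h (h + L)` cover `S 0 (h + L)` while meeting exactly in the orthant
at `h • f` (the times admissible for a given `x` form an interval). This gives the cocycle identity
`G (h + L) = G h + exp (s h) * G L`; comparing it with the identity for `L + h` yields
`G L * (1 - exp (s h)) = G h * (1 - exp (s L))`. Squeezing `S 0 h` between two orthants shows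
`G h / h → ∑ fᵢ⁺` as `h → 0⁺`, hence `G L = (∑ fᵢ⁺) (1 - exp (s L)) / (-s)`, and letting `L → ∞`,
`ν (S 0 L) → 1 - (∑ fᵢ⁺) / s = (∑ fᵢ⁻) / s`.
-/

open MeasureTheory Set Filter Topology Real

lemma tendsto_exp_mul_sub_one_div (a : ℝ) :
    Tendsto (fun h => (exp (a * h) - 1) / h) (𝓝[>] 0) (𝓝 a) := by
  simpa [div_eq_inv_mul] using
    ((hasDerivAt_id (0 : ℝ)).const_mul a).exp.tendsto_slope_zero_right

lemma neg_mul_eq_of_add_eq_add_exp_mul {s c : ℝ} {G : ℝ → ℝ}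
    (hG : ∀ h L, 0 ≤ h → 0 ≤ L → G (h + L) = G h + exp (s * h) * G L)
    (hG' : Tendsto (fun h => G h / h) (𝓝[>] 0) (𝓝 c)) {L : ℝ} (hL : 0 ≤ L) :
    -s * G L = c * (1 - exp (s * L)) := by
  have hsymm : ∀ h > 0, G L * ((1 - exp (s * h)) / h) = G h / h * (1 - exp (s * L)) := by
    intro h hh
    have h1 := hG h L hh.le hL
    have h2 := hG L h hL hh.le
    rw [add_comm, h2] at h1
    field_simp
    linarith
  have hlim : Tendsto (fun h => G L * ((1 - exp (s * h)) / h)) (𝓝[>] 0) (𝓝 (G L * -s)) := by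
    refine (((tendsto_exp_mul_sub_one_div s).neg).congr fun h => ?_).const_mul (G L)
    ring
  have hlim' := hlim.congr' (eventually_nhdsWithin_of_forall hsymm)
  rw [mul_comm]
  exact tendsto_nhds_unique (l := 𝓝[>] (0 : ℝ)) hlim' (hG'.mul_const _)

section SweptSet

variable {ι : Type*} (f : ι → ℝ)

def sweptSet (a b : ℝ) : Set (ι → ℝ) :=
  {x | ∃ t ∈ Icc a b, ∀ i, x i < f i * t}

lemma sweptSet_eq_biUnion (a b : ℝ) :
    sweptSet f a b = ⋃ t ∈ Icc a b, univ.pi fun i => Iio (f i * t) := by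
  ext x; simp [sweptSet]

lemma sweptSet_self (t : ℝ) : sweptSet f t t = univ.pi fun i => Iio (f i * t) := by
  simp [sweptSet_eq_biUnion]

lemma isOpen_sweptSet [Finite ι] (a b : ℝ) : IsOpen (sweptSet f a b) := by
  rw [sweptSet_eq_biUnion]
  exact isOpen_biUnion fun t _ => isOpen_set_pi finite_univ fun i _ => isOpen_Iio

lemma sweptSet_subset_pi (a b : ℝ) :
    sweptSet f a b ⊆ univ.pi fun i => Iio (max (f i * a) (f i * b)) := by
  rintro x ⟨t, ⟨hat, htb⟩, hx⟩ i -
  rcases le_total 0 (f i) with hfi | hfi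
  · exact (hx i).trans_le <| (mul_le_mul_of_nonneg_left htb hfi).trans (le_max_right _ _)
  · exact (hx i).trans_le <| (mul_le_mul_of_nonpos_left hat hfi).trans (le_max_left _ _)

lemma sweptSet_mono {a b a' b' : ℝ} (ha : a' ≤ a) (hb : b ≤ b') :
    sweptSet f a b ⊆ sweptSet f a' b' := by
  rintro x ⟨t, ⟨hat, htb⟩, hx⟩
  exact ⟨t, ⟨ha.trans hat, htb.trans hb⟩, hx⟩

lemma sweptSet_union {a b c : ℝ} (hab : a ≤ b) (hbc : b ≤ c) :
    sweptSet f a b ∪ sweptSet f b c = sweptSet f a c := by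
  refine union_subset (sweptSet_mono f le_rfl hbc) (sweptSet_mono f hab le_rfl) |>.antisymm ?_
  rintro x ⟨t, ⟨hat, htc⟩, hx⟩
  rcases le_total t b with htb | hbt
  · exact Or.inl ⟨t, ⟨hat, htb⟩, hx⟩
  · exact Or.inr ⟨t, ⟨hbt, htc⟩, hx⟩

lemma sweptSet_inter {a b c : ℝ} (hab : a ≤ b) (hbc : b ≤ c) :
    sweptSet f a b ∩ sweptSet f b c = sweptSet f b b := by
  refine subset_antisymm ?_ (subset_inter (sweptSet_mono f hab le_rfl) (sweptSet_mono f le_rfl hbc))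
  rintro x ⟨⟨t, ⟨-, htb⟩, hx⟩, ⟨u, ⟨hbu, -⟩, hy⟩⟩
  refine ⟨b, ⟨le_rfl, le_rfl⟩, fun i => ?_⟩
  rcases le_total 0 (f i) with hfi | hfi
  · exact (hx i).trans_le (mul_le_mul_of_nonneg_left htb hfi)
  · exact (hy i).trans_le (mul_le_mul_of_nonpos_left hbu hfi)

lemma sweptSet_add_add (a b h : ℝ) :
    sweptSet f (a + h) (b + h) = (· + h • f) '' sweptSet f a b := by
  rw [image_add_right]
  ext x
  simp only [sweptSet, mem_ofPred_eq, mem_preimage, Pi.add_apply, Pi.neg_apply, Pi.smul_apply,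
    smul_eq_mul]
  constructor
  · rintro ⟨t, ⟨hat, htb⟩, hx⟩
    exact ⟨t - h, ⟨by linarith, by linarith⟩, fun i => by linarith [hx i]⟩
  · rintro ⟨t, ⟨hat, htb⟩, hx⟩
    exact ⟨t + h, ⟨by linarith, by linarith⟩, fun i => by linarith [hx i]⟩

end SweptSet

section ExpSumMeasure

variable {ι : Type*} [Fintype ι]

noncomputable def expSumMeasure (ι : Type*) [Fintype ι] : Measure (ι → ℝ) :=
  volume.withDensity fun x => ENNReal.ofReal (exp (∑ i, x i))

lemma expSumMeasure_apply (A : Set (ι → ℝ)) :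
    expSumMeasure ι A = ∫⁻ x in A, ENNReal.ofReal (exp (∑ i, x i)) :=
  withDensity_apply' _ _

lemma integral_indicator_exp_sum {A : Set (ι → ℝ)} (hA : MeasurableSet A) :
    ∫ x, A.indicator (fun x => exp (∑ i, x i)) x = (expSumMeasure ι).real A := by
  rw [integral_indicator hA, integral_eq_lintegral_of_nonneg_ae
    (ae_of_all _ fun x => (exp_pos _).le) (by fun_prop), measureReal_def, expSumMeasure_apply]

lemma expSumMeasure_pi_Iio (a : ι → ℝ) :
    expSumMeasure ι (univ.pi fun i => Iio (a i)) = ENNReal.ofReal (exp (∑ i, a i)) := by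
  have hexp (i : ι) : Integrable exp (volume.restrict (Iio (a i))) :=
    (integrableOn_exp_Iic (a i)).mono_set Iio_subset_Iic_self
  simp_rw [expSumMeasure_apply, exp_sum]
  rw [volume_pi, Measure.restrict_pi_pi, ← ofReal_integral_eq_lintegral_ofReal
    (Integrable.fintype_prod hexp) (ae_of_all _ fun x => by positivity),
    integral_fintype_prod_eq_prod]
  congr 1
  refine Finset.prod_congr rfl fun i _ => ?_
  rw [setIntegral_congr_set Iio_ae_eq_Iic, integral_exp_Iic]

lemma measureReal_pi_Iio (a : ι → ℝ) :
    (expSumMeasure ι).real (univ.pi fun i => Iio (a i)) = exp (∑ i, a i) := by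
  rw [measureReal_def, expSumMeasure_pi_Iio, ENNReal.toReal_ofReal (exp_pos _).le]

lemma expSumMeasure_image_add_right (v : ι → ℝ) (A : Set (ι → ℝ)) :
    expSumMeasure ι ((· + v) '' A) = ENNReal.ofReal (exp (∑ i, v i)) * expSumMeasure ι A := by
  rw [expSumMeasure_apply, expSumMeasure_apply,
    ← (measurePreserving_add_right volume v).setLIntegral_comp_emb (measurableEmbedding_addRight v),
    ← lintegral_const_mul' _ _ ENNReal.ofReal_ne_top]
  congr 1 with x
  simp [Finset.sum_add_distrib, exp_add, ENNReal.ofReal_mul (exp_pos _).le, mul_comm]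

variable (f : ι → ℝ)

lemma sum_min_zero_add_sum_max_zero : ∑ i, min (f i) 0 + ∑ i, max (f i) 0 = ∑ i, f i := by
  rw [← Finset.sum_add_distrib]
  exact Finset.sum_congr rfl fun i _ => by rw [min_add_max, add_zero]

lemma measurableSet_sweptSet (a b : ℝ) : MeasurableSet (sweptSet f a b) :=
  (isOpen_sweptSet f a b).measurableSet

lemma expSumMeasure_sweptSet_ne_top (a b : ℝ) : expSumMeasure ι (sweptSet f a b) ≠ ⊤ :=
  ne_top_of_le_ne_top ENNReal.ofReal_ne_top
    ((measure_mono (sweptSet_subset_pi f a b)).trans_eq (expSumMeasure_pi_Iio _))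

lemma measureReal_sweptSet_self (t : ℝ) :
    (expSumMeasure ι).real (sweptSet f t t) = exp ((∑ i, f i) * t) := by
  rw [sweptSet_self, measureReal_pi_Iio, Finset.sum_mul]

lemma measureReal_sweptSet_add_add (a b h : ℝ) :
    (expSumMeasure ι).real (sweptSet f (a + h) (b + h))
      = exp ((∑ i, f i) * h) * (expSumMeasure ι).real (sweptSet f a b) := by
  rw [sweptSet_add_add, measureReal_def, expSumMeasure_image_add_right, ENNReal.toReal_mul,
    ENNReal.toReal_ofReal (exp_pos _).le, measureReal_def]
  simp [← Finset.mul_sum, mul_comm]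

lemma measureReal_sweptSet_le (a b : ℝ) :
    (expSumMeasure ι).real (sweptSet f a b) ≤ exp (∑ i, max (f i * a) (f i * b)) :=
  (measureReal_mono (sweptSet_subset_pi f a b)
    (by rw [expSumMeasure_pi_Iio]; exact ENNReal.ofReal_ne_top)).trans_eq (measureReal_pi_Iio _)

lemma le_measureReal_sweptSet {a b : ℝ} (hab : a ≤ b) :
    exp ((∑ i, f i) * a) + exp ((∑ i, f i) * b) - exp (∑ i, min (f i * a) (f i * b))
      ≤ (expSumMeasure ι).real (sweptSet f a b) := by
  have hinter :
      sweptSet f a a ∩ sweptSet f b b = univ.pi fun i => Iio (min (f i * a) (f i * b)) := by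
    simp only [sweptSet_self, ← pi_inter_distrib, Iio_inter_Iio]
  have hunion := measureReal_union_add_inter (μ := expSumMeasure ι) (measurableSet_sweptSet f b b)
    (expSumMeasure_sweptSet_ne_top f a a) (expSumMeasure_sweptSet_ne_top f b b)
  rw [hinter, measureReal_pi_Iio, measureReal_sweptSet_self, measureReal_sweptSet_self] at hunion
  have hsub : sweptSet f a a ∪ sweptSet f b b ⊆ sweptSet f a b :=
    union_subset (sweptSet_mono f le_rfl hab) (sweptSet_mono f hab le_rfl)
  linarith [measureReal_mono hsub (expSumMeasure_sweptSet_ne_top f a b)]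

lemma measureReal_sweptSet_add {h L : ℝ} (hh : 0 ≤ h) (hL : 0 ≤ L) :
    (expSumMeasure ι).real (sweptSet f 0 (h + L)) + exp ((∑ i, f i) * h)
      = (expSumMeasure ι).real (sweptSet f 0 h)
        + exp ((∑ i, f i) * h) * (expSumMeasure ι).real (sweptSet f 0 L) := by
  have hunion := measureReal_union_add_inter (μ := expSumMeasure ι)
    (measurableSet_sweptSet f h (h + L)) (expSumMeasure_sweptSet_ne_top f 0 h)
    (expSumMeasure_sweptSet_ne_top f h (h + L))
  have hshift := measureReal_sweptSet_add_add f 0 L h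
  rw [zero_add, add_comm L] at hshift
  rwa [sweptSet_union f hh (by linarith), sweptSet_inter f hh (by linarith),
    measureReal_sweptSet_self, hshift] at hunion

lemma tendsto_measureReal_sweptSet_sub_one_div :
    Tendsto (fun h => ((expSumMeasure ι).real (sweptSet f 0 h) - 1) / h) (𝓝[>] 0)
      (𝓝 (∑ i, max (f i) 0)) := by
  have hmax : ∀ h ≥ 0, ∑ i, max (f i * 0) (f i * h) = (∑ i, max (f i) 0) * h := fun h hh => by
    simp [Finset.sum_mul, max_mul_of_nonneg _ _ hh, max_comm]
  have hmin : ∀ h ≥ 0, ∑ i, min (f i * 0) (f i * h) = (∑ i, min (f i) 0) * h := fun h hh => by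
    simp [Finset.sum_mul, min_mul_of_nonneg _ _ hh, min_comm]
  have hsum : ∑ i, f i - ∑ i, min (f i) 0 = ∑ i, max (f i) 0 := by
    linarith [sum_min_zero_add_sum_max_zero f]
  refine tendsto_of_tendsto_of_tendsto_of_le_of_le'
    (hsum ▸ (tendsto_exp_mul_sub_one_div _).sub (tendsto_exp_mul_sub_one_div _))
    (tendsto_exp_mul_sub_one_div _) ?_ ?_ <;>
    filter_upwards [self_mem_nhdsWithin] with h (hh : 0 < h)
  · have hlower := le_measureReal_sweptSet f hh.le
    rw [hmin h hh.le, mul_zero, exp_zero] at hlower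
    rw [← sub_div]
    exact div_le_div_of_nonneg_right (by linarith) hh.le
  · have hupper := measureReal_sweptSet_le f 0 h
    rw [hmax h hh.le] at hupper
    gcongr

lemma measureReal_sweptSet_zero_left (hf : ∑ i, f i < 0) {L : ℝ} (hL : 0 ≤ L) :
    (expSumMeasure ι).real (sweptSet f 0 L)
      = 1 + (∑ i, max (f i) 0) * (1 - exp ((∑ i, f i) * L)) / -∑ i, f i := by
  have key := neg_mul_eq_of_add_eq_add_exp_mul
    (G := fun L => (expSumMeasure ι).real (sweptSet f 0 L) - 1)
    (fun h L hh hL => by linarith [measureReal_sweptSet_add f hh hL])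
    (tendsto_measureReal_sweptSet_sub_one_div f) hL
  have hs := hf.ne
  field_simp
  linarith

end ExpSumMeasure

/-- For `f ∈ ℝ^d` with `Σ_i f_i < 0`, the integral
`I(L) = ∫_{ℝ^d} 1{∃ t ∈ [0,L] : x < f t} e^{Σ_i x_i} dx` converges, as `L → ∞`,
to `(Σ_i f_i⁻)/(Σ_i f_i)`. -/
theorem stmt9 {d : ℕ} (f : Fin d → ℝ) (hf : (∑ i, f i) < 0) :
    Tendsto (fun L : ℝ =>
      ∫ x : Fin d → ℝ,
        Set.indicator {x : Fin d → ℝ | ∃ t ∈ Icc (0 : ℝ) L, ∀ i, x i < f i * t}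
          (fun x => Real.exp (∑ i, x i)) x)
      atTop (nhds ((∑ i, min (f i) 0) / (∑ i, f i))) := by
  have hexp : Tendsto (fun L => exp ((∑ i, f i) * L)) atTop (𝓝 0) :=
    tendsto_exp_atBot.comp (tendsto_id.const_mul_atTop_of_neg hf)
  have hlim : 1 + (∑ i, max (f i) 0) * (1 - 0) / -∑ i, f i = (∑ i, min (f i) 0) / ∑ i, f i := by
    have hs := hf.ne
    field_simp
    linarith [sum_min_zero_add_sum_max_zero f]
  refine (hlim ▸ ((hexp.const_sub 1).const_mul _ |>.div_const _ |>.const_add 1)).congr' ?_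
  filter_upwards [eventually_ge_atTop 0] with L hL
  rw [← measureReal_sweptSet_zero_left f hf hL,
    ← integral_indicator_exp_sum (measurableSet_sweptSet f 0 L)]
  rfl
end

section
/- Under condition B0 (each v_i is C¹, strictly increasing, with v_i(0) = 0) and A nonsingular, there exist τ̄ ∈ (0,T) and λ* > 0 such that for all t ∈ [τ̄, T] and all i ∈ I_T one has λ_i(t) > λ*; in particular I_T ⊆ I_t for all t ∈ [τ̄, T]. -/
/-!
Put `q t x = x ⬝ᵥ Σ(t)⁻¹ *ᵥ x = ∑ i, (v i t)⁻¹ * (A⁻¹ *ᵥ x) i ^ 2`. As the `v i` increase,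
`q T ≤ q t` for `t ≤ T`, and strong convexity of `q T` at its minimiser `ã T` on the convex set
`{x | a ≤ x}` gives `q T (ã t - ã T) ≤ 2 * (q t (ã T) - q T (ã T))`, which tends to `0` as
`t → T⁻`. Hence `A⁻¹ *ᵥ ã t → A⁻¹ *ᵥ ã T`, so `λ t = A⁻¹ᵀ *ᵥ diag (v t)⁻¹ *ᵥ A⁻¹ *ᵥ ã t` is
left-continuous at `T`, and finitely many positive coordinates of `λ T` stay above a common
positive bound near `T`.
-/

open Matrix Set Filter Topology

namespace Matrix

variable {n : Type*} [Fintype n]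

theorem inv_mul_diagonal_mul_transpose [DecidableEq n] {K : Type*} [Field K] (B : Matrix n n K)
    {u : n → K} (hu : ∀ i, u i ≠ 0) : (B * diagonal u * Bᵀ)⁻¹ = B⁻¹ᵀ * diagonal u⁻¹ * B⁻¹ := by
  have hdiag : (diagonal u)⁻¹ = diagonal u⁻¹ :=
    inv_eq_left_inv <| by
      rw [diagonal_mul_diagonal, ← diagonal_one]
      exact congrArg diagonal (funext fun i => inv_mul_cancel₀ (hu i))
  rw [mul_inv_rev, mul_inv_rev, hdiag, transpose_nonsing_inv, Matrix.mul_assoc]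

theorem dotProduct_transpose_mul_diagonal_mul_mulVec {m R : Type*} [Fintype m] [DecidableEq m]
    [CommSemiring R]     (C : Matrix m n R) (u : m → R) (x : n → R) :
    x ⬝ᵥ (Cᵀ * diagonal u * C) *ᵥ x = ∑ i, u i * (C *ᵥ x) i ^ 2 := by
  rw [← mulVec_mulVec, ← mulVec_mulVec, dotProduct_mulVec, vecMul_transpose, dotProduct]
  simp only [mulVec_diagonal]
  exact Finset.sum_congr rfl fun i _ => by ring

theorem dotProduct_mulVec_sub_le_of_isMinOn {𝕜 : Type*} [Field 𝕜] [LinearOrder 𝕜]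
    [IsStrictOrderedRing 𝕜] {M : Matrix n n 𝕜} {K : Set (n → 𝕜)} (hK : Convex 𝕜 K) {x y : n → 𝕜}
    (hx : x ∈ K) (hy : y ∈ K) (hmin : IsMinOn (fun z => z ⬝ᵥ M *ᵥ z) K x) :
    (y - x) ⬝ᵥ M *ᵥ (y - x) ≤ 2 * (y ⬝ᵥ M *ᵥ y - x ⬝ᵥ M *ᵥ x) := by
  have hmid : x ⬝ᵥ M *ᵥ x ≤ ((2⁻¹ : 𝕜) • (x + y)) ⬝ᵥ M *ᵥ ((2⁻¹ : 𝕜) • (x + y)) := by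
    refine hmin ?_
    rw [smul_add]
    exact hK hx hy (by norm_num) (by norm_num) (by norm_num)
  simp only [mulVec_smul, mulVec_add, mulVec_sub, smul_dotProduct, dotProduct_smul, add_dotProduct,
    dotProduct_add, sub_dotProduct, dotProduct_sub, smul_eq_mul] at hmid ⊢
  linarith

end Matrix

theorem tendsto_zero_of_sq_le {α : Type*} {l : Filter α} {f g : α → ℝ}
    (hg : Tendsto g l (𝓝 0)) (hfg : ∀ᶠ t in l, f t ^ 2 ≤ g t) : Tendsto f l (𝓝 0) := by
  refine squeeze_zero_norm' (hfg.mono fun t ht => ?_) (by simpa using hg.sqrt)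
  rw [Real.norm_eq_abs]
  exact Real.abs_le_sqrt ht

theorem exists_Icc_forall_lt_of_continuousWithinAt {ι : Type*} [Finite ι] {f : ℝ → ι → ℝ}
    {T : ℝ} (hT : 0 < T) (hf : ContinuousWithinAt f (Iic T) T) :
    ∃ τ ∈ Ioo 0 T, ∃ c > 0, ∀ t ∈ Icc τ T, ∀ i, 0 < f T i → c < f t i := by
  obtain ⟨c, hc, hcf⟩ : ∃ c > 0, ∀ i, 0 < f T i → c < f T i := by
    have hsmall : ∀ᶠ c in 𝓝[>] (0 : ℝ), ∀ i, 0 < f T i → c < f T i :=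
      eventually_all.2 fun i => by
        by_cases hi : 0 < f T i
        · exact (eventually_nhdsWithin_of_eventually_nhds (eventually_lt_nhds hi)).mono
            fun c hc _ => hc
        · exact .of_forall fun c h => absurd h hi
    exact (eventually_mem_nhdsWithin.and hsmall).exists
  have hnear : ∀ᶠ t in 𝓝[≤] T, ∀ i, 0 < f T i → c < f t i :=
    eventually_all.2 fun i => by
      by_cases hi : 0 < f T i
      · exact ((tendsto_pi_nhds.1 hf i).eventually_const_lt (hcf i hi)).mono fun t ht _ => ht
      · exact .of_forall fun t h => absurd h hi
  obtain ⟨l, hl, hsub⟩ := mem_nhdsLE_iff_exists_Ioc_subset.1 hnear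
  have hl' : max l 0 < T := max_lt hl hT
  refine ⟨(max l 0 + T) / 2, ⟨by linarith [le_max_right l 0], by linarith⟩, c, hc,
    fun t ht => hsub ⟨?_, ht.2⟩⟩
  linarith [le_max_left l 0, ht.1]

section MinimizerStability

variable {n : Type*} [Fintype n] [DecidableEq n] {T : ℝ} {v : n → ℝ → ℝ} {B : Matrix n n ℝ}
  {K : Set (n → ℝ)} {x : ℝ → n → ℝ}

theorem tendsto_inv_mulVec_of_isMinOn (hT : 0 < T)
    (hv_cont : ∀ i, ContinuousWithinAt (v i) (Iic T) T)
    (hv_pos : ∀ i, ∀ t ∈ Ioc 0 T, 0 < v i t) (hv_le : ∀ i, ∀ t ∈ Ioc 0 T, v i t ≤ v i T)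
    (hK : Convex ℝ K)
    (hx : ∀ t ∈ Ioc 0 T, x t ∈ K ∧
      IsMinOn (fun y => y ⬝ᵥ (B * diagonal (fun i => v i t) * Bᵀ)⁻¹ *ᵥ y) K (x t)) :
    Tendsto (fun t => B⁻¹ *ᵥ x t) (𝓝[≤] T) (𝓝 (B⁻¹ *ᵥ x T)) := by
  have hT' : T ∈ Ioc 0 T := right_mem_Ioc.2 hT
  set q : ℝ → (n → ℝ) → ℝ := fun t y => ∑ i, (v i t)⁻¹ * (B⁻¹ *ᵥ y) i ^ 2
  have hq : ∀ t ∈ Ioc 0 T, ∀ y, y ⬝ᵥ (B * diagonal (fun i => v i t) * Bᵀ)⁻¹ *ᵥ y = q t y :=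
    fun t ht y => by
      rw [inv_mul_diagonal_mul_transpose _ fun i => (hv_pos i t ht).ne',
        dotProduct_transpose_mul_diagonal_mul_mulVec]
      rfl
  have hgap : ∀ t ∈ Ioc 0 T, q T (x t - x T) ≤ 2 * (q t (x T) - q T (x T)) := by
    intro t ht
    have hconv := dotProduct_mulVec_sub_le_of_isMinOn hK (hx T hT').1 (hx t ht).1 (hx T hT').2
    have hmono : q T (x t) ≤ q t (x t) := Finset.sum_le_sum fun i _ =>
      mul_le_mul_of_nonneg_right (inv_anti₀ (hv_pos i t ht) (hv_le i t ht)) (sq_nonneg _)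
    have hmin : q t (x t) ≤ q t (x T) := by
      rw [← hq t ht, ← hq t ht]
      exact (hx t ht).2 (hx T hT').1
    rw [hq T hT', hq T hT', hq T hT'] at hconv
    linarith
  have hlim : Tendsto (fun t => 2 * (q t (x T) - q T (x T))) (𝓝[≤] T) (𝓝 0) := by
    have : Tendsto (fun t => q t (x T)) (𝓝[≤] T) (𝓝 (q T (x T))) :=
      tendsto_finsetSum _ fun i _ =>
        ((hv_cont i).inv₀ (hv_pos i T hT').ne').mul_const _
    simpa using (this.sub_const (q T (x T))).const_mul 2
  refine tendsto_pi_nhds.2 fun i => tendsto_sub_nhds_zero_iff.1 <|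
    tendsto_zero_of_sq_le ((hlim.const_mul (v i T)).trans (by rw [mul_zero])) ?_
  filter_upwards [Ioc_mem_nhdsLE hT] with t ht
  have hterm : (v i T)⁻¹ * (B⁻¹ *ᵥ (x t - x T)) i ^ 2 ≤ q T (x t - x T) :=
    Finset.single_le_sum (f := fun j => (v j T)⁻¹ * (B⁻¹ *ᵥ (x t - x T)) j ^ 2)
      (fun j _ => mul_nonneg (inv_nonneg.2 (hv_pos j T hT').le) (sq_nonneg _))
      (Finset.mem_univ i)
  rw [mulVec_sub, Pi.sub_apply, inv_mul_le_iff₀ (hv_pos i T hT')] at hterm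
  exact hterm.trans (mul_le_mul_of_nonneg_left (hgap t ht) (hv_pos i T hT').le)

theorem continuousWithinAt_inv_mulVec_of_isMinOn (hT : 0 < T)
    (hv_cont : ∀ i, ContinuousWithinAt (v i) (Iic T) T)
    (hv_pos : ∀ i, ∀ t ∈ Ioc 0 T, 0 < v i t) (hv_le : ∀ i, ∀ t ∈ Ioc 0 T, v i t ≤ v i T)
    (hK : Convex ℝ K)
    (hx : ∀ t ∈ Ioc 0 T, x t ∈ K ∧
      IsMinOn (fun y => y ⬝ᵥ (B * diagonal (fun i => v i t) * Bᵀ)⁻¹ *ᵥ y) K (x t)) :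
    ContinuousWithinAt (fun t => (B * diagonal (fun i => v i t) * Bᵀ)⁻¹ *ᵥ x t) (Iic T) T := by
  have hform : ∀ t ∈ Ioc 0 T, (B * diagonal (fun i => v i t) * Bᵀ)⁻¹ *ᵥ x t =
      B⁻¹ᵀ *ᵥ fun i => (v i t)⁻¹ * (B⁻¹ *ᵥ x t) i := fun t ht => by
    rw [inv_mul_diagonal_mul_transpose _ fun i => (hv_pos i t ht).ne', ← mulVec_mulVec,
      ← mulVec_mulVec]
    congr 1
    ext i
    exact mulVec_diagonal _ _ i
  have hw := tendsto_pi_nhds.1 (tendsto_inv_mulVec_of_isMinOn hT hv_cont hv_pos hv_le hK hx)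
  have hscaled : Tendsto (fun t => fun i => (v i t)⁻¹ * (B⁻¹ *ᵥ x t) i) (𝓝[≤] T)
      (𝓝 fun i => (v i T)⁻¹ * (B⁻¹ *ᵥ x T) i) := tendsto_pi_nhds.2 fun i =>
    ((hv_cont i).inv₀ (hv_pos i T (right_mem_Ioc.2 hT)).ne').mul (hw i)
  rw [ContinuousWithinAt, hform T (right_mem_Ioc.2 hT)]
  refine Tendsto.congr' ?_
    ((continuous_const.matrix_mulVec continuous_id).tendsto _ |>.comp hscaled)
  filter_upwards [Ioc_mem_nhdsLE hT] with t ht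
  exact (hform t ht).symm

end MinimizerStability

theorem stmt10_general {d : ℕ} (T : ℝ) (hT : 0 < T)
    (v : Fin d → ℝ → ℝ)
    (hv_C1 : ∀ i, ContDiffOn ℝ 1 (v i) (Icc 0 T))
    (hv_mono : ∀ i, StrictMonoOn (v i) (Icc 0 T))
    (hv_0 : ∀ i, v i 0 = 0)
    (A : Matrix (Fin d) (Fin d) ℝ)
    (a : Fin d → ℝ)
    (Sg : ℝ → Matrix (Fin d) (Fin d) ℝ)
    (hSg : ∀ t, Sg t = A * Matrix.diagonal (fun i => v i t) * Aᵀ)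
    (ta : ℝ → Fin d → ℝ)
    (hta : ∀ t ∈ Ioc (0 : ℝ) T, (∀ i, a i ≤ ta t i) ∧
      ∀ y : Fin d → ℝ, (∀ i, a i ≤ y i) →
        ta t ⬝ᵥ (Sg t)⁻¹ *ᵥ ta t ≤ y ⬝ᵥ (Sg t)⁻¹ *ᵥ y)
    (lam : ℝ → Fin d → ℝ) (hlam : ∀ t, lam t = (Sg t)⁻¹ *ᵥ ta t) :
    ∃ τ ∈ Ioo (0 : ℝ) T, ∃ lamstar > (0 : ℝ),
      (∀ t ∈ Icc τ T, ∀ i, 0 < lam T i → lamstar < lam t i) ∧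
      (∀ t ∈ Icc τ T, ∀ i, 0 < lam T i → 0 < lam t i) := by
  have hv_pos : ∀ i, ∀ t ∈ Ioc 0 T, 0 < v i t := fun i t ht => by
    simpa [hv_0] using hv_mono i (left_mem_Icc.2 hT.le) (Ioc_subset_Icc_self ht) ht.1
  have hv_le : ∀ i, ∀ t ∈ Ioc 0 T, v i t ≤ v i T := fun i t ht =>
    (hv_mono i).monotoneOn (Ioc_subset_Icc_self ht) (right_mem_Icc.2 hT.le) ht.2
  have hv_cont : ∀ i, ContinuousWithinAt (v i) (Iic T) T := fun i =>
    ((hv_C1 i).continuousOn.continuousWithinAt (right_mem_Icc.2 hT.le)).mono_of_mem_nhdsWithin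
      (Icc_mem_nhdsLE hT)
  have hlam_cont : ContinuousWithinAt lam (Iic T) T := by
    simp only [funext hlam, hSg] at hta ⊢
    exact continuousWithinAt_inv_mulVec_of_isMinOn hT hv_cont hv_pos hv_le (convex_Ici a) hta
  obtain ⟨τ, hτ, c, hc, hlt⟩ := exists_Icc_forall_lt_of_continuousWithinAt hT hlam_cont
  exact ⟨τ, hτ, c, hc, hlt, fun t ht i hi => hc.trans (hlt t ht i hi)⟩

/-- Lemma 4.8 (i)-(ii) of the paper. Under B0 and `A` nonsingular,
there exist `τ̄ ∈ (0,T)` and `λ* > 0` such that `λ_i(t) > λ*` for all `t ∈ [τ̄, T]` and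
all `i ∈ I_T`; in particular `I_T ⊆ I_t` for all `t ∈ [τ̄, T]`. -/
theorem stmt10 {d : ℕ} (T : ℝ) (hT : 0 < T)
    (v : Fin d → ℝ → ℝ)
    (hv_C1 : ∀ i, ContDiffOn ℝ 1 (v i) (Icc 0 T))
    (hv_mono : ∀ i, StrictMonoOn (v i) (Icc 0 T))
    (hv_0 : ∀ i, v i 0 = 0)
    (A : Matrix (Fin d) (Fin d) ℝ) (hA : IsUnit A.det)
    (a : Fin d → ℝ) (ha : ∃ i, 0 < a i)
    (Sg : ℝ → Matrix (Fin d) (Fin d) ℝ)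
    (hSg : ∀ t, Sg t = A * Matrix.diagonal (fun i => v i t) * Aᵀ)
    (ta : ℝ → Fin d → ℝ)
    (hta : ∀ t ∈ Ioc (0 : ℝ) T, (∀ i, a i ≤ ta t i) ∧
      ∀ y : Fin d → ℝ, (∀ i, a i ≤ y i) →
        ta t ⬝ᵥ (Sg t)⁻¹ *ᵥ ta t ≤ y ⬝ᵥ (Sg t)⁻¹ *ᵥ y)
    (lam : ℝ → Fin d → ℝ) (hlam : ∀ t, lam t = (Sg t)⁻¹ *ᵥ ta t) :
    ∃ τ ∈ Ioo (0 : ℝ) T, ∃ lamstar > (0 : ℝ),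
      (∀ t ∈ Icc τ T, ∀ i, 0 < lam T i → lamstar < lam t i) ∧
      (∀ t ∈ Icc τ T, ∀ i, 0 < lam T i → 0 < lam t i) :=
  stmt10_general T hT v hv_C1 hv_mono hv_0 A a Sg hSg ta hta lam hlam
end

section
/- Under conditions B0 (each v_i is C¹, strictly increasing, with v_i(0) = 0) and BI (v̇_i(T) > 0 for each i), and A nonsingular, set Q := diag(v̇₁(T)/v₁(T),…,v̇_d(T)/v_d(T)), λ := λ(T), ã := ã(T). Then the denominator Σ_{i=1}^d λ_i · (A Q A^{−1} ã)_i is strictly positive, so that the constant 𝒞 := ( Σ_{i=1}^d max(λ_i · (A Q A^{−1} ã)_i, 0) ) / ( Σ_{i=1}^d λ_i · (A Q A^{−1} ã)_i ) is well defined, and moreover 𝒞 ≥ 1. -/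
open Matrix Set

/-!
Write `V = diag(v_i(T))` and `w = A⁻¹ ã`. Since `Σ = A V Aᵀ`, we get `λ = A⁻ᵀ V⁻¹ w` and
`A Q A⁻¹ ã = A Q w`; the factors `A⁻ᵀ` and `A` cancel in the dot product, so
`Σ_i λ_i (A Q A⁻¹ ã)_i = Σ_i v̇_i(T) / v_i(T)² · w_i²`. This is positive because `ã ≥ a` has a
positive coordinate, so `w ≠ 0`. Then `𝒞 ≥ 1` because `max(x, 0) ≥ x` termwise.
-/

namespace Matrix

variable {K n : Type*} [Field K] [Fintype n] [DecidableEq n]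

lemma inv_diagonal_of_ne_zero {v : n → K} (hv : ∀ i, v i ≠ 0) :
    (diagonal v)⁻¹ = diagonal fun i => (v i)⁻¹ := by
  refine inv_eq_left_inv ?_
  simp only [diagonal_mul_diagonal, inv_mul_cancel₀ (hv _), diagonal_one]

lemma transpose_inv_mulVec_dotProduct_mulVec {A : Matrix n n K} (hA : IsUnit A.det)
    (u z : n → K) : (A⁻¹ᵀ *ᵥ u) ⬝ᵥ (A *ᵥ z) = u ⬝ᵥ z := by
  rw [mulVec_transpose, ← dotProduct_mulVec, mulVec_mulVec, nonsing_inv_mul A hA, one_mulVec]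

lemma congr_diagonal_inv_mulVec_dotProduct_conj_diagonal_mulVec {A : Matrix n n K}
    (hA : IsUnit A.det) {v : n → K} (hv : ∀ i, v i ≠ 0) (q x : n → K) :
    ((A * diagonal v * Aᵀ)⁻¹ *ᵥ x) ⬝ᵥ ((A * diagonal q * A⁻¹) *ᵥ x) =
      ∑ i, q i / v i * (A⁻¹ *ᵥ x) i ^ 2 := by
  rw [mul_inv_rev, mul_inv_rev, inv_diagonal_of_ne_zero hv, ← transpose_nonsing_inv,
    ← mulVec_mulVec, ← mulVec_mulVec, mul_assoc, ← mulVec_mulVec, ← mulVec_mulVec,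
    transpose_inv_mulVec_dotProduct_mulVec hA, dotProduct]
  refine Finset.sum_congr rfl fun i _ => ?_
  simp only [mulVec_diagonal]
  ring

end Matrix

lemma sum_mul_sq_pos {K ι : Type*} [Field K] [LinearOrder K] [IsStrictOrderedRing K]
    [Fintype ι] {c w : ι → K} (hc : ∀ i, 0 < c i) (hw : w ≠ 0) : 0 < ∑ i, c i * w i ^ 2 := by
  obtain ⟨j, hj⟩ := Function.ne_iff.mp hw
  exact Finset.sum_pos' (fun i _ => mul_nonneg (hc i).le (sq_nonneg _))
    ⟨j, Finset.mem_univ j, mul_pos (hc j) (pow_two_pos_of_ne_zero hj)⟩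

lemma one_le_sum_max_zero_div_sum {K ι : Type*} [Field K] [LinearOrder K]
    [IsStrictOrderedRing K] {s : Finset ι} {f : ι → K} (hf : 0 < ∑ i ∈ s, f i) :
    1 ≤ (∑ i ∈ s, max (f i) 0) / ∑ i ∈ s, f i := by
  rw [le_div_iff₀ hf, one_mul]
  exact Finset.sum_le_sum fun i _ => le_max_left _ _

theorem stmt14_general {d : ℕ} (T : ℝ) (hT : 0 < T)
    (v : Fin d → ℝ → ℝ)
    (hv_mono : ∀ i, StrictMonoOn (v i) (Icc 0 T))
    (hv_0 : ∀ i, v i 0 = 0)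
    (v' : Fin d → ℝ)
    (hBI : ∀ i, 0 < v' i)
    (A : Matrix (Fin d) (Fin d) ℝ) (hA : IsUnit A.det)
    (a : Fin d → ℝ) (ha : ∃ i, 0 < a i)
    (Sg : ℝ → Matrix (Fin d) (Fin d) ℝ)
    (hSg : ∀ t, Sg t = A * Matrix.diagonal (fun i => v i t) * Aᵀ)
    (ta : ℝ → Fin d → ℝ)
    (hta : ∀ t ∈ Ioc (0 : ℝ) T, (∀ i, a i ≤ ta t i) ∧
      ∀ y : Fin d → ℝ, (∀ i, a i ≤ y i) →
        ta t ⬝ᵥ (Sg t)⁻¹ *ᵥ ta t ≤ y ⬝ᵥ (Sg t)⁻¹ *ᵥ y)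
    (lam : Fin d → ℝ) (hlam : lam = (Sg T)⁻¹ *ᵥ ta T)
    (Q : Matrix (Fin d) (Fin d) ℝ)
    (hQ : Q = Matrix.diagonal (fun i => v' i / v i T)) :
    0 < ∑ i, lam i * ((A * Q * A⁻¹) *ᵥ ta T) i ∧
    1 ≤ (∑ i, max (lam i * ((A * Q * A⁻¹) *ᵥ ta T) i) 0) /
        (∑ i, lam i * ((A * Q * A⁻¹) *ᵥ ta T) i) := by
  have hvT : ∀ i, 0 < v i T := fun i => by
    simpa [hv_0 i] using hv_mono i ⟨le_rfl, hT.le⟩ ⟨hT.le, le_rfl⟩ hT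
  have hta_ne : ta T ≠ 0 := by
    obtain ⟨i, hi⟩ := ha
    exact fun h => (hi.trans_le ((hta T ⟨hT, le_rfl⟩).1 i)).ne' (congrFun h i)
  have hw : A⁻¹ *ᵥ ta T ≠ 0 := fun h => hta_ne <| by
    simpa [mulVec_mulVec, mul_nonsing_inv A hA] using congrArg (A *ᵥ ·) h
  have hsum : ∑ i, lam i * ((A * Q * A⁻¹) *ᵥ ta T) i =
      ∑ i, v' i / v i T / v i T * (A⁻¹ *ᵥ ta T) i ^ 2 := by
    rw [hlam, hSg, hQ]
    exact congr_diagonal_inv_mulVec_dotProduct_conj_diagonal_mulVec hA (fun i => (hvT i).ne') _ _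
  have hpos : 0 < ∑ i, lam i * ((A * Q * A⁻¹) *ᵥ ta T) i :=
    hsum ▸ sum_mul_sq_pos (fun i => by have := hvT i; have := hBI i; positivity) hw
  exact ⟨hpos, one_le_sum_max_zero_div_sum hpos⟩

/-- Under B0, BI and `A` nonsingular, with `Q := diag(v̇_i(T)/v_i(T))`,
`λ := λ(T)`, `ã := ã(T)`, the sum `Σ_i λ_i (A Q A⁻¹ ã)_i` is strictly positive, so the
constant `𝒞 = (Σ_i max(λ_i (A Q A⁻¹ ã)_i, 0)) / (Σ_i λ_i (A Q A⁻¹ ã)_i)` is well defined,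
and `𝒞 ≥ 1`. -/
theorem stmt14 {d : ℕ} (T : ℝ) (hT : 0 < T)
    (v : Fin d → ℝ → ℝ)
    (hv_C1 : ∀ i, ContDiffOn ℝ 1 (v i) (Icc 0 T))
    (hv_mono : ∀ i, StrictMonoOn (v i) (Icc 0 T))
    (hv_0 : ∀ i, v i 0 = 0)
    (v' : Fin d → ℝ)
    (hv' : ∀ i, HasDerivWithinAt (v i) (v' i) (Icc 0 T) T)
    (hBI : ∀ i, 0 < v' i)
    (A : Matrix (Fin d) (Fin d) ℝ) (hA : IsUnit A.det)
    (a : Fin d → ℝ) (ha : ∃ i, 0 < a i)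
    (Sg : ℝ → Matrix (Fin d) (Fin d) ℝ)
    (hSg : ∀ t, Sg t = A * Matrix.diagonal (fun i => v i t) * Aᵀ)
    (ta : ℝ → Fin d → ℝ)
    (hta : ∀ t ∈ Ioc (0 : ℝ) T, (∀ i, a i ≤ ta t i) ∧
      ∀ y : Fin d → ℝ, (∀ i, a i ≤ y i) →
        ta t ⬝ᵥ (Sg t)⁻¹ *ᵥ ta t ≤ y ⬝ᵥ (Sg t)⁻¹ *ᵥ y)
    (lam : Fin d → ℝ) (hlam : lam = (Sg T)⁻¹ *ᵥ ta T)
    (Q : Matrix (Fin d) (Fin d) ℝ)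
    (hQ : Q = Matrix.diagonal (fun i => v' i / v i T)) :
    0 < ∑ i, lam i * ((A * Q * A⁻¹) *ᵥ ta T) i ∧
    1 ≤ (∑ i, max (lam i * ((A * Q * A⁻¹) *ᵥ ta T) i) 0) /
        (∑ i, lam i * ((A * Q * A⁻¹) *ᵥ ta T) i) :=
  stmt14_general T hT v hv_mono hv_0 v' hBI A hA a ha Sg hSg ta hta lam hlam Q hQ
end

section
/- Let μ > 0, σ ∈ ℝ, and L > 0. Then for Y an exponentially distributed random variable with rate μ (density y ↦ μ e^{−μy} on [0,∞)): E[e^{σ·min(L,Y)}] = ∫₀^∞ e^{σ·min(L,y)} μ e^{−μy} dy equals μ·L + 1 when σ = μ, and equals (σ/(σ−μ))·e^{(σ−μ)L} − μ/(σ−μ) when σ ≠ μ. -/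
open MeasureTheory Set

theorem integral_exp_mul {c : ℝ} (hc : c ≠ 0) (a b : ℝ) :
    ∫ x in a..b, Real.exp (c * x) = (Real.exp (c * b) - Real.exp (c * a)) / c := by
  rw [intervalIntegral.integral_comp_mul_left Real.exp hc, integral_exp, smul_eq_mul,
    inv_mul_eq_div]

theorem integral_Ioi_self_exp_mul_min_mul_exp_neg_mul {μ : ℝ} (hμ : 0 < μ) (σ L : ℝ) :
    ∫ y in Ioi L, Real.exp (σ * min L y) * (μ * Real.exp (-μ * y))
      = Real.exp ((σ - μ) * L) := by
  have h_tail : EqOn (fun y => Real.exp (σ * min L y) * (μ * Real.exp (-μ * y)))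
      (fun y => Real.exp (σ * L) * μ * Real.exp (-μ * y)) (Ioi L) := by
    intro y hy
    simp only [min_eq_left ((mem_Ioi.mp hy).le)]
    ring
  rw [setIntegral_congr_fun measurableSet_Ioi h_tail, integral_const_mul,
    integral_exp_mul_Ioi (neg_lt_zero.mpr hμ)]
  field_simp
  rw [← Real.exp_add]
  ring_nf

theorem integral_Ioi_zero_exp_mul_min_mul_exp_neg_mul {μ L : ℝ} (hμ : 0 < μ) (hL : 0 ≤ L) (σ : ℝ) :
    ∫ y in Ioi 0, Real.exp (σ * min L y) * (μ * Real.exp (-μ * y))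
      = μ * (∫ y in (0 : ℝ)..L, Real.exp ((σ - μ) * y)) + Real.exp ((σ - μ) * L) := by
  set f : ℝ → ℝ := fun y => Real.exp (σ * min L y) * (μ * Real.exp (-μ * y))
  have h_head : EqOn f (fun y => μ * Real.exp ((σ - μ) * y)) (uIcc 0 L) := by
    intro y hy
    rw [uIcc_of_le hL] at hy
    simp only [f, min_eq_right hy.2, ← mul_assoc, mul_comm _ μ, mul_assoc μ, ← Real.exp_add]
    ring_nf
  have h_tail_int : IntegrableOn f (Ioi L) := by
    refine Integrable.of_integral_ne_zero ?_
    rw [integral_Ioi_self_exp_mul_min_mul_exp_neg_mul hμ]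
    exact (Real.exp_pos _).ne'
  have h_head_int : IntervalIntegrable f volume 0 L := by
    apply Continuous.intervalIntegrable
    fun_prop
  rw [← intervalIntegral.integral_interval_add_Ioi' h_head_int h_tail_int,
    intervalIntegral.integral_congr h_head, intervalIntegral.integral_const_mul,
    integral_Ioi_self_exp_mul_min_mul_exp_neg_mul hμ]

/-- For `Y ~ Exp(μ)` (density `μ e^{-μ y}` on `[0,∞)`), `σ ∈ ℝ` and
`L > 0`: `E[e^{σ min(L,Y)}] = ∫₀^∞ e^{σ min(L,y)} μ e^{-μ y} dy` equals `μ L + 1` when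
`σ = μ`, and `(σ/(σ-μ)) e^{(σ-μ)L} - μ/(σ-μ)` when `σ ≠ μ`. -/
theorem stmt15 (μ σ L : ℝ) (hμ : 0 < μ) (hL : 0 < L) :
    (σ = μ →
      (∫ y in Ioi (0 : ℝ), Real.exp (σ * min L y) * (μ * Real.exp (-μ * y)))
        = μ * L + 1) ∧
    (σ ≠ μ →
      (∫ y in Ioi (0 : ℝ), Real.exp (σ * min L y) * (μ * Real.exp (-μ * y)))
        = σ / (σ - μ) * Real.exp ((σ - μ) * L) - μ / (σ - μ)) := by
  rw [integral_Ioi_zero_exp_mul_min_mul_exp_neg_mul hμ hL.le]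
  constructor
  · rintro rfl
    simp
  · intro hσμ
    have hc : σ - μ ≠ 0 := sub_ne_zero.mpr hσμ
    rw [integral_exp_mul hc, mul_zero, Real.exp_zero]
    field_simp
    ring
end
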